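/- arXiv:1512.08146 — 2 statements merged into one kernel-verified Lean document; each statement's English description precedes it below -/
import Mathlib

section
/- Let α > β > 1 and γ > 0. Define l_n := n^{−α} for 2^{2j} ≤ n < 2^{2j+1} (j ∈ ℕ₀) and l_n := n^{−β} for 2^{2j−1} ≤ n < 2^{2j} (j ∈ ℕ), and define θ_n := π/2 for 2^{2j} ≤ n < 2^{2j+1} (j ∈ ℕ₀) and θ_n := n^{−γ} for 2^{2j−1} ≤ n < 2^{2j} (j ∈ ℕ). Then liminf_{m→∞} −(1/(m ln m))·ln(l_m^{1/2}·∏_{k=1}^{m−1} l_k) = (2β + α)/3 and liminf_{m→∞} −(1/(m ln m))·ln(∏_{k=1}^{m−1} |sin θ_k|) = γ/3. -/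
open Filter

namespace S15
open Finset

noncomputable def E (m : ℕ) : ℝ :=
  ∑ k ∈ Finset.Ico 1 m, (if Even (Nat.log 2 k) then Real.log k else 0)
noncomputable def O (m : ℕ) : ℝ :=
  ∑ k ∈ Finset.Ico 1 m, (if Even (Nat.log 2 k) then 0 else Real.log k)

noncomputable def D : ℝ := Real.log 2

lemma D_pos : 0 < D := Real.log_pos (by norm_num)

lemma D_le_one : D ≤ 1 := by
  have := Real.log_le_sub_one_of_pos (x := 2) (by norm_num)
  rw [D]; linarith

lemma E_nonneg (m : ℕ) : 0 ≤ E m := by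
  apply Finset.sum_nonneg; intro k _
  split
  · exact Real.log_natCast_nonneg k
  · exact le_refl 0

lemma O_nonneg (m : ℕ) : 0 ≤ O m := by
  apply Finset.sum_nonneg; intro k _
  split
  · exact le_refl 0
  · exact Real.log_natCast_nonneg k

lemma E_mono {m m' : ℕ} (h : m ≤ m') : E m ≤ E m' := by
  apply Finset.sum_le_sum_of_subset_of_nonneg (Finset.Ico_subset_Ico le_rfl h)
  intro k _ _
  split
  · exact Real.log_natCast_nonneg k
  · exact le_refl 0

lemma O_mono {m m' : ℕ} (h : m ≤ m') : O m ≤ O m' := by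
  apply Finset.sum_le_sum_of_subset_of_nonneg (Finset.Ico_subset_Ico le_rfl h)
  intro k _ _
  split
  · exact le_refl 0
  · exact Real.log_natCast_nonneg k

noncomputable def F (m : ℕ) : ℝ := ∑ k ∈ Finset.Ico 1 m, Real.log k

lemma F_nonneg (m : ℕ) : 0 ≤ F m :=
  Finset.sum_nonneg fun k _ => Real.log_natCast_nonneg k

lemma F_split {a m : ℕ} (h1 : 1 ≤ a) (h2 : a ≤ m) :
    F m = F a + ∑ k ∈ Finset.Ico a m, Real.log k :=
  (Finset.sum_Ico_consecutive _ h1 h2).symm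

lemma EO (m : ℕ) : E m + O m = F m := by
  rw [F]
  rw [E, O, ← Finset.sum_add_distrib]
  apply Finset.sum_congr rfl
  intro k _
  split <;> ring

lemma natlog_eq {i k : ℕ} (h1 : 2^i ≤ k) (h2 : k < 2^(i+1)) : Nat.log 2 k = i :=
  Nat.log_eq_of_pow_le_of_lt_pow h1 h2

lemma log_lb {i k : ℕ} (h1 : 2^i ≤ k) : (i:ℝ) * D ≤ Real.log k := by
  rw [D, ← Real.log_pow]
  apply Real.log_le_log (by positivity)
  exact_mod_cast h1

lemma log_ub {i k : ℕ} (hk : 1 ≤ k) (h2 : k ≤ 2^(i+1)) : Real.log k ≤ ((i:ℝ)+1) * D := by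
  rw [D]
  have h : ((i:ℝ)+1) * Real.log 2 = Real.log ((2:ℝ)^(i+1)) := by
    rw [Real.log_pow]; push_cast; ring
  rw [h]
  apply Real.log_le_log (by exact_mod_cast hk)
  exact_mod_cast h2

-- decompositions
lemma E_split {a m : ℕ} (h1 : 1 ≤ a) (h2 : a ≤ m) :
    E m = E a + ∑ k ∈ Finset.Ico a m, (if Even (Nat.log 2 k) then Real.log k else 0) :=
  (Finset.sum_Ico_consecutive _ h1 h2).symm

lemma O_split {a m : ℕ} (h1 : 1 ≤ a) (h2 : a ≤ m) :
    O m = O a + ∑ k ∈ Finset.Ico a m, (if Even (Nat.log 2 k) then 0 else Real.log k) :=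
  (Finset.sum_Ico_consecutive _ h1 h2).symm

-- block sum bounds
lemma E_block_lb {i s t : ℕ} (hi : Even i) (hst : s ≤ t) (hs : 2^i ≤ s) (ht : t ≤ 2^(i+1)) :
    ((t:ℝ) - s) * ((i:ℝ) * D) ≤
      ∑ k ∈ Finset.Ico s t, (if Even (Nat.log 2 k) then Real.log k else 0) := by
  have h := Finset.card_nsmul_le_sum (Finset.Ico s t)
      (fun k => if Even (Nat.log 2 k) then Real.log k else 0) ((i:ℝ) * D) ?_
  · rw [nsmul_eq_mul, Nat.card_Ico, Nat.cast_sub hst] at h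
    linarith
  · intro k hk
    obtain ⟨hk1, hk2⟩ := Finset.mem_Ico.mp hk
    simp only [natlog_eq (le_trans hs hk1) (lt_of_lt_of_le hk2 ht), if_pos hi]
    exact log_lb (le_trans hs hk1)

lemma O_block_lb {i s t : ℕ} (hi : ¬ Even i) (hst : s ≤ t) (hs : 2^i ≤ s) (ht : t ≤ 2^(i+1)) :
    ((t:ℝ) - s) * ((i:ℝ) * D) ≤
      ∑ k ∈ Finset.Ico s t, (if Even (Nat.log 2 k) then 0 else Real.log k) := by
  have h := Finset.card_nsmul_le_sum (Finset.Ico s t)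
      (fun k => if Even (Nat.log 2 k) then 0 else Real.log k) ((i:ℝ) * D) ?_
  · rw [nsmul_eq_mul, Nat.card_Ico, Nat.cast_sub hst] at h
    linarith
  · intro k hk
    obtain ⟨hk1, hk2⟩ := Finset.mem_Ico.mp hk
    simp only [natlog_eq (le_trans hs hk1) (lt_of_lt_of_le hk2 ht), if_neg hi]
    exact log_lb (le_trans hs hk1)

lemma E_block_zero {i s t : ℕ} (hi : ¬ Even i) (hs : 2^i ≤ s) (ht : t ≤ 2^(i+1)) :
    ∑ k ∈ Finset.Ico s t, (if Even (Nat.log 2 k) then Real.log k else 0) = 0 := by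
  apply Finset.sum_eq_zero
  intro k hk
  obtain ⟨hk1, hk2⟩ := Finset.mem_Ico.mp hk
  rw [natlog_eq (le_trans hs hk1) (lt_of_lt_of_le hk2 ht), if_neg hi]

lemma O_block_zero {i s t : ℕ} (hi : Even i) (hs : 2^i ≤ s) (ht : t ≤ 2^(i+1)) :
    ∑ k ∈ Finset.Ico s t, (if Even (Nat.log 2 k) then 0 else Real.log k) = 0 := by
  apply Finset.sum_eq_zero
  intro k hk
  obtain ⟨hk1, hk2⟩ := Finset.mem_Ico.mp hk
  rw [natlog_eq (le_trans hs hk1) (lt_of_lt_of_le hk2 ht), if_pos hi]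

lemma E_block_ub {i s t : ℕ} (hst : s ≤ t) (hs : 2^i ≤ s) (ht : t ≤ 2^(i+1)) :
    ∑ k ∈ Finset.Ico s t, (if Even (Nat.log 2 k) then Real.log k else 0) ≤
      ((t:ℝ) - s) * (((i:ℝ)+1) * D) := by
  have h := Finset.sum_le_card_nsmul (Finset.Ico s t)
      (fun k => if Even (Nat.log 2 k) then Real.log k else 0) (((i:ℝ)+1) * D) ?_
  · rw [nsmul_eq_mul, Nat.card_Ico, Nat.cast_sub hst] at h
    linarith
  · intro k hk
    obtain ⟨hk1, hk2⟩ := Finset.mem_Ico.mp hk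
    have hk1' : 1 ≤ k := le_trans (Nat.one_le_two_pow) (le_trans hs hk1)
    have hlog := log_ub (i := i) hk1' (le_of_lt (lt_of_lt_of_le hk2 ht))
    have hD : 0 ≤ ((i:ℝ)+1) * D := mul_nonneg (by positivity) D_pos.le
    split
    · exact hlog
    · exact hD

lemma O_block_ub {i s t : ℕ} (hst : s ≤ t) (hs : 2^i ≤ s) (ht : t ≤ 2^(i+1)) :
    ∑ k ∈ Finset.Ico s t, (if Even (Nat.log 2 k) then 0 else Real.log k) ≤
      ((t:ℝ) - s) * (((i:ℝ)+1) * D) := by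
  have h := Finset.sum_le_card_nsmul (Finset.Ico s t)
      (fun k => if Even (Nat.log 2 k) then 0 else Real.log k) (((i:ℝ)+1) * D) ?_
  · rw [nsmul_eq_mul, Nat.card_Ico, Nat.cast_sub hst] at h
    linarith
  · intro k hk
    obtain ⟨hk1, hk2⟩ := Finset.mem_Ico.mp hk
    have hk1' : 1 ≤ k := le_trans (Nat.one_le_two_pow) (le_trans hs hk1)
    have hlog := log_ub (i := i) hk1' (le_of_lt (lt_of_lt_of_le hk2 ht))
    have hD : 0 ≤ ((i:ℝ)+1) * D := mul_nonneg (by positivity) D_pos.le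
    split
    · exact hD
    · exact hlog

-- power lemmas, appended to a.lean namespace for testing
lemma F_block_lb {i s t : ℕ} (hst : s ≤ t) (hs : 2^i ≤ s) :
    ((t:ℝ) - s) * ((i:ℝ) * D) ≤ ∑ k ∈ Finset.Ico s t, Real.log k := by
  have h := Finset.card_nsmul_le_sum (Finset.Ico s t)
      (fun k => Real.log k) ((i:ℝ) * D) ?_
  · rw [nsmul_eq_mul, Nat.card_Ico, Nat.cast_sub hst] at h
    linarith
  · intro k hk
    obtain ⟨hk1, hk2⟩ := Finset.mem_Ico.mp hk
    exact log_lb (le_trans hs hk1)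

lemma E_one : E 1 = 0 := by simp [E]
lemma O_one : O 1 = 0 := by simp [O]

lemma cast_pow2 (J : ℕ) : ((2^(2*J) : ℕ) : ℝ) = 4^J := by
  rw [Nat.cast_pow, pow_mul]; norm_num

lemma cast_pow2' (J : ℕ) : ((2^(2*J+1) : ℕ) : ℝ) = 2 * 4^J := by
  rw [Nat.cast_pow, pow_succ, pow_mul]; norm_num; ring

lemma E_pow_lb (J : ℕ) : D * ((6*(J:ℝ) - 8) * 4^J / 9) ≤ E (2^(2*J)) := by
  induction J with
  | zero =>
    norm_num [E_one]
    nlinarith [D_pos]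
  | succ J ih =>
    have h1 : (2:ℕ)^(2*J) ≤ 2^(2*J+1) := Nat.pow_le_pow_right (by norm_num) (by omega)
    have h2 : (2:ℕ)^(2*J+1) ≤ 2^(2*(J+1)) := Nat.pow_le_pow_right (by norm_num) (by omega)
    have hsplit := E_split (a := 2^(2*J)) (m := 2^(2*J+1)) Nat.one_le_two_pow h1
    have hblock := E_block_lb (i := 2*J) (s := 2^(2*J)) (t := 2^(2*J+1))
      (even_two_mul J) h1 le_rfl le_rfl
    have hmono := E_mono h2
    rw [cast_pow2, cast_pow2'] at hblock
    push_cast at hblock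
    have hp : (4:ℝ)^(J+1) = 4*4^J := by ring
    push_cast
    rw [hp]
    linarith [D_pos, hblock, hmono, ih, hsplit.le, hsplit.ge]

lemma O_pow_lb (J : ℕ) : D * ((6*(J:ℝ) - 5) * 2 * 4^J / 9) ≤ O (2^(2*J)) := by
  induction J with
  | zero =>
    norm_num [O_one]
    nlinarith [D_pos]
  | succ J ih =>
    have h1 : (2:ℕ)^(2*J) ≤ 2^(2*J+1) := Nat.pow_le_pow_right (by norm_num) (by omega)
    have h2 : (2:ℕ)^(2*J+1) ≤ 2^(2*J+2) := Nat.pow_le_pow_right (by norm_num) (by omega)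
    have hsplit := O_split (a := 2^(2*J+1)) (m := 2^(2*J+2)) Nat.one_le_two_pow h2
    have hblock := O_block_lb (i := 2*J+1) (s := 2^(2*J+1)) (t := 2^(2*J+2))
      (by simp [Nat.even_add_one, Nat.even_mul]) h2 le_rfl le_rfl
    have hmono := O_mono h1
    have hc2 : ((2^(2*J+2) : ℕ) : ℝ) = 4 * 4^J := by
      rw [Nat.cast_pow, pow_succ, pow_succ, pow_mul]; norm_num; ring
    rw [cast_pow2', hc2] at hblock
    push_cast at hblock
    have h22 : (2:ℕ)^(2*(J+1)) = 2^(2*J+2) := by ring_nf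
    rw [h22]
    have hp : (4:ℝ)^(J+1) = 4*4^J := by ring
    push_cast
    rw [hp]
    linarith [D_pos, hblock, hmono, ih, hsplit.le, hsplit.ge]

lemma F_one : F 1 = 0 := by simp [F]

lemma F_pow_lb (M : ℕ) : D * (((M:ℝ) - 2) * 2^M) ≤ F (2^M) := by
  induction M with
  | zero =>
    norm_num [F_one]
    nlinarith [D_pos]
  | succ M ih =>
    have h1 : (2:ℕ)^M ≤ 2^(M+1) := Nat.pow_le_pow_right (by norm_num) (by omega)
    have hsplit := F_split (a := 2^M) (m := 2^(M+1)) Nat.one_le_two_pow h1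
    have hblock := F_block_lb (i := M) (s := 2^M) (t := 2^(M+1)) h1 le_rfl
    have hcM : ((2^M : ℕ) : ℝ) = 2^M := by rw [Nat.cast_pow]; norm_num
    have hcM1 : ((2^(M+1) : ℕ) : ℝ) = 2 * 2^M := by rw [Nat.cast_pow]; norm_num; ring
    rw [hcM, hcM1] at hblock
    have hp : (2:ℝ)^(M+1) = 2*2^M := by ring
    push_cast
    rw [hp]
    linarith [D_pos, hblock, ih, hsplit.le, hsplit.ge]

lemma E_pow_ub (J : ℕ) : E (2^(2*J)) ≤ D * (((6*(J:ℝ) - 5) * 4^J + 5) / 9) := by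
  induction J with
  | zero =>
    norm_num [E_one]
  | succ J ih =>
    have h1 : (2:ℕ)^(2*J) ≤ 2^(2*J+1) := Nat.pow_le_pow_right (by norm_num) (by omega)
    have h2 : (2:ℕ)^(2*J+1) ≤ 2^(2*J+2) := Nat.pow_le_pow_right (by norm_num) (by omega)
    have hsplit1 := E_split (a := 2^(2*J)) (m := 2^(2*J+1)) Nat.one_le_two_pow h1
    have hsplit2 := E_split (a := 2^(2*J+1)) (m := 2^(2*J+2)) Nat.one_le_two_pow h2
    have hblock := E_block_ub (i := 2*J) (s := 2^(2*J)) (t := 2^(2*J+1)) h1 le_rfl le_rfl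
    have hzero := E_block_zero (i := 2*J+1) (s := 2^(2*J+1)) (t := 2^(2*J+2))
      (by simp [Nat.even_add_one, Nat.even_mul]) le_rfl le_rfl
    rw [cast_pow2, cast_pow2'] at hblock
    push_cast at hblock
    rw [hzero] at hsplit2
    have h22 : (2:ℕ)^(2*(J+1)) = 2^(2*J+2) := by ring_nf
    rw [h22]
    have hp : (4:ℝ)^(J+1) = 4*4^J := by ring
    push_cast
    rw [hp]
    linarith [D_pos, hblock, ih, hsplit1.le, hsplit1.ge, hsplit2.le, hsplit2.ge]

lemma O_two : O 2 = 0 := by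
  rw [O]
  norm_num [Finset.sum_Ico_eq_sum_range]

lemma O_pow_ub (J : ℕ) : O (2^(2*J+1)) ≤ D * (((3*(J:ℝ) - 1) * 4^(J+1) + 4) / 9) := by
  induction J with
  | zero =>
    norm_num [O_two]
  | succ J ih =>
    have h2 : (2:ℕ)^(2*J+1) ≤ 2^(2*J+2) := Nat.pow_le_pow_right (by norm_num) (by omega)
    have h3 : (2:ℕ)^(2*J+2) ≤ 2^(2*J+3) := Nat.pow_le_pow_right (by norm_num) (by omega)
    have hsplit1 := O_split (a := 2^(2*J+1)) (m := 2^(2*J+2)) Nat.one_le_two_pow h2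
    have hsplit2 := O_split (a := 2^(2*J+2)) (m := 2^(2*J+3)) Nat.one_le_two_pow h3
    have hblock := O_block_ub (i := 2*J+1) (s := 2^(2*J+1)) (t := 2^(2*J+2)) h2 le_rfl le_rfl
    have hzero := O_block_zero (i := 2*J+2) (s := 2^(2*J+2)) (t := 2^(2*J+3))
      (by simp [Nat.even_add, Nat.even_mul]) le_rfl le_rfl
    have hc2 : ((2^(2*J+2) : ℕ) : ℝ) = 4 * 4^J := by
      rw [Nat.cast_pow, pow_succ, pow_succ, pow_mul]; norm_num; ring
    rw [cast_pow2', hc2] at hblock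
    push_cast at hblock
    rw [hzero] at hsplit2
    have h22 : 2*(J+1)+1 = 2*J+3 := by omega
    rw [h22]
    have hp : (4:ℝ)^(J+1+1) = 4*4^(J+1) := by ring
    have hq : (4:ℝ)^(J+1) = 4*4^J := by ring
    rw [hq] at ih
    push_cast
    rw [hp, hq]
    linarith [D_pos, hblock, ih, hsplit1.le, hsplit1.ge, hsplit2.le, hsplit2.ge]

lemma pow_log_le {m : ℕ} (hm : 1 ≤ m) : 2^(Nat.log 2 m) ≤ m := Nat.pow_log_le_self 2 (by omega)
lemma lt_pow_log (m : ℕ) : m < 2^(Nat.log 2 m + 1) := Nat.lt_pow_succ_log_self (by norm_num) m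

lemma log_m_lb {m : ℕ} (hm : 1 ≤ m) : (Nat.log 2 m : ℝ) * D ≤ Real.log m := log_lb (pow_log_le hm)
lemma log_m_ub {m : ℕ} (hm : 1 ≤ m) : Real.log m ≤ ((Nat.log 2 m : ℝ) + 1) * D :=
  log_ub hm (le_of_lt (lt_pow_log m))

lemma E_lb {m : ℕ} (hm : 1 ≤ m) :
    D * ((m:ℝ) * (3*(Nat.log 2 m : ℝ) - 8) / 9) ≤ E m := by
  rcases le_or_gt (3*(Nat.log 2 m:ℝ) - 8) 0 with hM8 | hM8
  · refine le_trans ?_ (E_nonneg m)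
    have h1 : ((m:ℝ)) * (3*(Nat.log 2 m:ℝ)-8) ≤ 0 :=
      mul_nonpos_of_nonneg_of_nonpos (Nat.cast_nonneg m) hM8
    have := mul_nonpos_of_nonneg_of_nonpos D_pos.le
      (by linarith : (m:ℝ) * (3*(Nat.log 2 m:ℝ)-8)/9 ≤ 0)
    linarith
  · have hM3 : 3 ≤ Nat.log 2 m := by
      by_contra h
      push_neg at h
      interval_cases (Nat.log 2 m) <;> norm_num at hM8
    rcases Nat.even_or_odd (Nat.log 2 m) with ⟨J, hJe⟩ | ⟨J, hJ⟩
    · have hJ : Nat.log 2 m = 2*J := by omega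
      have hJ2 : 2 ≤ J := by omega
      have hs : (2:ℕ)^(2*J) ≤ m := by rw [← hJ]; exact pow_log_le hm
      have ht : m ≤ 2^(2*J+1) := by
        have h := lt_pow_log m
        rw [hJ] at h
        exact h.le
      have hsplit := E_split (a := 2^(2*J)) (m := m) Nat.one_le_two_pow hs
      have hblock := E_block_lb (i := 2*J) (even_two_mul J) hs le_rfl ht
      rw [cast_pow2] at hblock
      push_cast at hblock
      have hpw := E_pow_lb J
      have h4m : (4:ℝ)^J ≤ (m:ℝ) := by
        calc (4:ℝ)^J = ((2^(2*J):ℕ):ℝ) := (cast_pow2 J).symm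
        _ ≤ m := Nat.cast_le.mpr hs
      have hint : (0:ℝ) ≤ D * ((m:ℝ) - 4^J) * (12*(J:ℝ)+8) :=
        mul_nonneg (mul_nonneg D_pos.le (by linarith)) (by positivity)
      rw [hJ]
      push_cast
      linarith [hsplit.le, hsplit.ge, hblock, hpw, hint]
    · have hJ1 : 1 ≤ J := by omega
      have hs1 : (2:ℕ)^(2*J+1) ≤ m := by rw [← hJ]; exact pow_log_le hm
      have hmono := E_mono hs1
      have h1 : (2:ℕ)^(2*J) ≤ 2^(2*J+1) := Nat.pow_le_pow_right (by norm_num) (by omega)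
      have hsplit := E_split (a := 2^(2*J)) (m := 2^(2*J+1)) Nat.one_le_two_pow h1
      have hblock := E_block_lb (i := 2*J) (even_two_mul J) h1 le_rfl le_rfl
      rw [cast_pow2, cast_pow2'] at hblock
      push_cast at hblock
      have hpw := E_pow_lb J
      have hm4 : (m:ℝ) ≤ 4*4^J := by
        have h := lt_pow_log m
        rw [hJ] at h
        calc (m:ℝ) ≤ ((2^(2*J+1+1):ℕ):ℝ) := Nat.cast_le.mpr h.le
        _ = 4*4^J := by rw [Nat.cast_pow, pow_succ, pow_succ, pow_mul]; norm_num; ring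
      have hint : (0:ℝ) ≤ D * (4*4^J - (m:ℝ)) * (6*(J:ℝ)-5) := by
        apply mul_nonneg (mul_nonneg D_pos.le (by linarith))
        have : (1:ℝ) ≤ (J:ℝ) := by exact_mod_cast hJ1
        linarith
      rw [hJ]
      push_cast
      linarith [hsplit.le, hsplit.ge, hblock, hpw, hmono, hint,
        mul_nonneg D_pos.le (by positivity : (0:ℝ) ≤ (4:ℝ)^J)]

lemma O_lb {m : ℕ} (hm : 1 ≤ m) :
    D * ((m:ℝ) * (3*(Nat.log 2 m : ℝ) - 8) / 9) ≤ O m := by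
  rcases le_or_gt (3*(Nat.log 2 m:ℝ) - 8) 0 with hM8 | hM8
  · refine le_trans ?_ (O_nonneg m)
    have h1 : ((m:ℝ)) * (3*(Nat.log 2 m:ℝ)-8) ≤ 0 :=
      mul_nonpos_of_nonneg_of_nonpos (Nat.cast_nonneg m) hM8
    have := mul_nonpos_of_nonneg_of_nonpos D_pos.le
      (by linarith : (m:ℝ) * (3*(Nat.log 2 m:ℝ)-8)/9 ≤ 0)
    linarith
  · have hM3 : 3 ≤ Nat.log 2 m := by
      by_contra h
      push_neg at h
      interval_cases (Nat.log 2 m) <;> norm_num at hM8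
    rcases Nat.even_or_odd (Nat.log 2 m) with ⟨J, hJe⟩ | ⟨J, hJ⟩
    · have hJ : Nat.log 2 m = 2*J := by omega
      have hJ2 : 2 ≤ J := by omega
      have hs : (2:ℕ)^(2*J) ≤ m := by rw [← hJ]; exact pow_log_le hm
      have hmono := O_mono hs
      have hpw := O_pow_lb J
      have hm2 : (m:ℝ) ≤ 2*4^J := by
        have h := lt_pow_log m
        rw [hJ] at h
        calc (m:ℝ) ≤ ((2^(2*J+1):ℕ):ℝ) := Nat.cast_le.mpr h.le
        _ = 2*4^J := cast_pow2' J
      have hint : (0:ℝ) ≤ D * (2*4^J - (m:ℝ)) * (6*(J:ℝ)-8) := by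
        apply mul_nonneg (mul_nonneg D_pos.le (by linarith))
        have : (2:ℝ) ≤ (J:ℝ) := by exact_mod_cast hJ2
        linarith
      rw [hJ]
      push_cast
      linarith [hmono, hpw, hint,
        mul_nonneg D_pos.le (by positivity : (0:ℝ) ≤ (4:ℝ)^J)]
    · have hJ1 : 1 ≤ J := by omega
      have hs1 : (2:ℕ)^(2*J+1) ≤ m := by rw [← hJ]; exact pow_log_le hm
      have ht : m ≤ 2^(2*J+1+1) := by
        have h := lt_pow_log m
        rw [hJ] at h
        exact h.le
      have hsplit := O_split (a := 2^(2*J+1)) (m := m) Nat.one_le_two_pow hs1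
      have hblock := O_block_lb (i := 2*J+1)
        (by simp [Nat.even_add_one, Nat.even_mul]) hs1 le_rfl ht
      rw [cast_pow2'] at hblock
      push_cast at hblock
      have h1 : (2:ℕ)^(2*J) ≤ 2^(2*J+1) := Nat.pow_le_pow_right (by norm_num) (by omega)
      have hmono := O_mono h1
      have hpw := O_pow_lb J
      have h2m : 2*(4:ℝ)^J ≤ (m:ℝ) := by
        calc 2*(4:ℝ)^J = ((2^(2*J+1):ℕ):ℝ) := (cast_pow2' J).symm
        _ ≤ m := Nat.cast_le.mpr hs1
      have hint : (0:ℝ) ≤ D * ((m:ℝ) - 2*4^J) * (12*(J:ℝ)+14) :=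
        mul_nonneg (mul_nonneg D_pos.le (by linarith)) (by positivity)
      rw [hJ]
      push_cast
      linarith [hsplit.le, hsplit.ge, hblock, hmono, hpw, hint]

lemma F_lb {m : ℕ} (hm : 1 ≤ m) :
    D * ((m:ℝ) * ((Nat.log 2 m : ℝ) - 2)) ≤ F m := by
  have hs : 2^(Nat.log 2 m) ≤ m := pow_log_le hm
  have hsplit := F_split (a := 2^(Nat.log 2 m)) (m := m) Nat.one_le_two_pow hs
  have hblock := F_block_lb (i := Nat.log 2 m) (s := 2^(Nat.log 2 m)) (t := m) hs le_rfl
  have hpw := F_pow_lb (Nat.log 2 m)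
  have hcast : ((2^(Nat.log 2 m):ℕ):ℝ) = 2^(Nat.log 2 m) := by rw [Nat.cast_pow]; norm_num
  rw [hcast] at hblock
  have h2m : (2:ℝ)^(Nat.log 2 m) ≤ (m:ℝ) := by
    rw [← hcast]; exact Nat.cast_le.mpr hs
  have hint : (0:ℝ) ≤ D * ((m:ℝ) - 2^(Nat.log 2 m)) * 2 :=
    mul_nonneg (mul_nonneg D_pos.le (by linarith)) (by norm_num)
  linarith [hsplit.le, hsplit.ge, hblock, hpw, hint]

lemma F_ub {m : ℕ} (hm : 1 ≤ m) : F m ≤ (m:ℝ) * Real.log m := by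
  have h := Finset.sum_le_card_nsmul (Finset.Ico 1 m) (fun k : ℕ => Real.log k) (Real.log m) ?_
  · rw [nsmul_eq_mul, Nat.card_Ico] at h
    refine le_trans h ?_
    apply mul_le_mul_of_nonneg_right _ (Real.log_natCast_nonneg m)
    exact_mod_cast Nat.sub_le m 1
  · intro k hk
    obtain ⟨h1, h2⟩ := Finset.mem_Ico.mp hk
    exact Real.log_le_log (by exact_mod_cast h1) (by exact_mod_cast h2.le)

lemma sum_c (a b : ℝ) (m : ℕ) :
    ∑ k ∈ Finset.Ico 1 m, (if Even (Nat.log 2 k) then a else b) * Real.log k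
      = a * E m + b * O m := by
  rw [E, O, Finset.mul_sum, Finset.mul_sum, ← Finset.sum_add_distrib]
  apply Finset.sum_congr rfl
  intro k _
  by_cases h : Even (Nat.log 2 k) <;> simp [h]

lemma log_pow2 (n : ℕ) : Real.log ((2^n : ℕ) : ℝ) = (n:ℝ) * D := by
  rw [Nat.cast_pow, Nat.cast_ofNat, Real.log_pow, D]

lemma E_ub_subseq (J : ℕ) :
    E (2^(2*J)) ≤ (1/3) * ((2^(2*J):ℕ):ℝ) * Real.log ((2^(2*J):ℕ):ℝ) := by
  have h := E_pow_ub J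
  rw [log_pow2, cast_pow2]
  have hone : (1:ℝ) ≤ 4^J := one_le_pow₀ (by norm_num)
  have hint : (0:ℝ) ≤ D * (4^J - 1) := mul_nonneg D_pos.le (by linarith)
  push_cast
  linarith [h, hint]

lemma O_ub_subseq (J : ℕ) :
    O (2^(2*J+1)) ≤ (1/3) * ((2^(2*J+1):ℕ):ℝ) * Real.log ((2^(2*J+1):ℕ):ℝ) := by
  have h := O_pow_ub J
  rw [log_pow2, cast_pow2']
  have hone : (1:ℝ) ≤ 4^J := one_le_pow₀ (by norm_num)
  have hint : (0:ℝ) ≤ D * (4^J - 1) := mul_nonneg D_pos.le (by linarith)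
  have hp : (4:ℝ)^(J+1) = 4*4^J := by ring
  rw [hp] at h
  push_cast
  linarith [h, hint, mul_nonneg D_pos.le (by positivity : (0:ℝ) ≤ (4:ℝ)^J)]

lemma theta_term_bounds (γ : ℝ) (hγ : 0 < γ) (θ : ℕ → ℝ)
    (hθ : ∀ n : ℕ, 1 ≤ n → θ n = if Even (Nat.log 2 n) then Real.pi / 2 else (n : ℝ) ^ (-γ))
    (k : ℕ) (hk : 1 ≤ k) :
    |Real.sin (θ k)| ≠ 0 ∧
    (if Even (Nat.log 2 k) then 0 else γ * Real.log k) ≤ -Real.log |Real.sin (θ k)| ∧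
    -Real.log |Real.sin (θ k)| ≤ (if Even (Nat.log 2 k) then 0 else γ * Real.log k) + 1 := by
  rw [hθ k hk]
  by_cases h : Even (Nat.log 2 k)
  · simp only [if_pos h, Real.sin_pi_div_two]
    norm_num
  · simp only [if_neg h]
    have hk0 : (0:ℝ) < k := by exact_mod_cast hk
    set x := (k:ℝ)^(-γ) with hx
    have hx0 : 0 < x := Real.rpow_pos_of_pos hk0 _
    have hx1 : x ≤ 1 := Real.rpow_le_one_of_one_le_of_nonpos (by exact_mod_cast hk) (by linarith)
    have hsin : 0 < Real.sin x :=
      Real.sin_pos_of_pos_of_lt_pi hx0 (by linarith [Real.pi_gt_three])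
    have habs : |Real.sin x| = Real.sin x := abs_of_pos hsin
    have hlogx : Real.log x = -γ * Real.log k := by rw [hx, Real.log_rpow hk0]
    have hub : Real.log (Real.sin x) ≤ Real.log x := Real.log_le_log hsin (Real.sin_lt hx0).le
    have h34 : (3/4) * x ≤ Real.sin x := by
      have hcube := Real.sin_gt_sub_cube hx0
      nlinarith [mul_nonneg hx0.le (by nlinarith [sq_nonneg x] : (0:ℝ) ≤ 1 - x^2)]
    have hlb : Real.log (3/4) + Real.log x ≤ Real.log (Real.sin x) := by
      have hll := Real.log_le_log (by linarith) h34
      rw [Real.log_mul (by norm_num) (ne_of_gt hx0)] at hll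
      exact hll
    have h43 : -Real.log (3/4) ≤ 1 := by
      have h1 := Real.log_le_sub_one_of_pos (show (0:ℝ) < 4/3 by norm_num)
      have h2 : Real.log (3/4) = - Real.log (4/3) := by
        rw [← Real.log_inv]; norm_num
      linarith
    refine ⟨by rw [habs]; exact ne_of_gt hsin, ?_, ?_⟩
    · rw [habs]; rw [hlogx] at hub; linarith
    · rw [habs]; rw [hlogx] at hlb; linarith

lemma liminf_coe_eq (u : ℕ → ℝ) (L : ℝ)
    (hlow : ∀ ε : ℝ, 0 < ε → ∀ᶠ m in atTop, L - ε ≤ u m)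
    (hfreq : ∀ ε : ℝ, 0 < ε → ∃ᶠ m in atTop, u m ≤ L + ε) :
    liminf (fun m => ((u m : ℝ) : EReal)) atTop = (L : EReal) := by
  apply le_antisymm
  · apply le_of_forall_gt_imp_ge_of_dense
    intro c hc
    rcases EReal.lt_iff_exists_real_btwn.mp hc with ⟨r, hr1, hr2⟩
    have hrL : L < r := by exact_mod_cast hr1
    have h := hfreq (r - L) (by linarith)
    have hli : liminf (fun m => ((u m : ℝ) : EReal)) atTop ≤ ((r : ℝ) : EReal) := by
      apply liminf_le_of_frequently_le'
      exact h.mono (fun m hm => by exact_mod_cast (by linarith : u m ≤ r))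
    exact le_trans hli hr2.le
  · apply le_of_forall_lt_imp_le_of_dense
    intro c hc
    rcases EReal.lt_iff_exists_real_btwn.mp hc with ⟨r, hr1, hr2⟩
    have hrL : r < L := by exact_mod_cast hr2
    have h := hlow (L - r) (by linarith)
    have hli : ((r : ℝ) : EReal) ≤ liminf (fun m => ((u m : ℝ) : EReal)) atTop := by
      apply le_liminf_of_le (by isBoundedDefault)
      exact h.mono (fun m hm => by exact_mod_cast (by linarith : r ≤ u m))
    exact le_trans hr1.le hli

end S15

/- For `n ≥ 1`, `Nat.log 2 n` is the unique `m` with `2^m ≤ n < 2^{m+1}`; thus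
`Even (Nat.log 2 n)` says `2^{2j} ≤ n < 2^{2j+1}` for some `j ∈ ℕ₀`, and
`¬ Even (Nat.log 2 n)` says `2^{2j-1} ≤ n < 2^{2j}` for some `j ∈ ℕ`. -/
set_option maxHeartbeats 2000000 in
theorem stmt15 (α β γ : ℝ) (hβ : 1 < β) (hαβ : β < α) (hγ : 0 < γ)
    (l θ : ℕ → ℝ)
    (hl : ∀ n : ℕ, 1 ≤ n →
      l n = if Even (Nat.log 2 n) then (n : ℝ) ^ (-α) else (n : ℝ) ^ (-β))
    (hθ : ∀ n : ℕ, 1 ≤ n →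
      θ n = if Even (Nat.log 2 n) then Real.pi / 2 else (n : ℝ) ^ (-γ)) :
    liminf (fun m : ℕ =>
        ((-(1 / ((m : ℝ) * Real.log m)) *
          Real.log (l m ^ ((1 : ℝ) / 2) * ∏ k ∈ Finset.Ico 1 m, l k) : ℝ) : EReal))
      atTop = (((2 * β + α) / 3 : ℝ) : EReal) ∧
    liminf (fun m : ℕ =>
        ((-(1 / ((m : ℝ) * Real.log m)) *
          Real.log (∏ k ∈ Finset.Ico 1 m, |Real.sin (θ k)|) : ℝ) : EReal))
      atTop = ((γ / 3 : ℝ) : EReal) := by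
  have hβ0 : 0 < β := by linarith
  have hα0 : 0 < α := by linarith
  have hab : 0 < α - β := by linarith
  -- the rewrite identity for part 1
  have hu1 : ∀ m : ℕ, 2 ≤ m →
      (-(1 / ((m : ℝ) * Real.log m)) *
        Real.log (l m ^ ((1 : ℝ) / 2) * ∏ k ∈ Finset.Ico 1 m, l k))
      = ((if Even (Nat.log 2 m) then α else β)/2 * Real.log m
          + (α * S15.E m + β * S15.O m)) / ((m:ℝ) * Real.log m) := by
    intro m hm2
    have hm1 : (1:ℕ) ≤ m := by omega
    have hprod : ∀ k ∈ Finset.Ico 1 m,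
        l k = (k:ℝ) ^ (-(if Even (Nat.log 2 k) then α else β)) := by
      intro k hk
      obtain ⟨hk1, _⟩ := Finset.mem_Ico.mp hk
      rw [hl k hk1]
      by_cases h : Even (Nat.log 2 k) <;> simp [h]
    rw [Finset.prod_congr rfl hprod]
    have hfacpos : ∀ k ∈ Finset.Ico 1 m,
        (0:ℝ) < (k:ℝ) ^ (-(if Even (Nat.log 2 k) then α else β)) := by
      intro k hk
      obtain ⟨hk1, _⟩ := Finset.mem_Ico.mp hk
      exact Real.rpow_pos_of_pos (by exact_mod_cast hk1) _
    have hPpos : 0 < ∏ k ∈ Finset.Ico 1 m, (k:ℝ) ^ (-(if Even (Nat.log 2 k) then α else β)) :=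
      Finset.prod_pos hfacpos
    have hmpos : (0:ℝ) < m := by positivity
    have hlm : l m = (m:ℝ) ^ (-(if Even (Nat.log 2 m) then α else β)) := by
      rw [hl m hm1]
      by_cases h : Even (Nat.log 2 m) <;> simp [h]
    have hlmpos : 0 < l m := by
      rw [hlm]; exact Real.rpow_pos_of_pos hmpos _
    have hApos : 0 < l m ^ ((1:ℝ)/2) := Real.rpow_pos_of_pos hlmpos _
    rw [Real.log_mul (ne_of_gt hApos) (ne_of_gt hPpos)]
    rw [Real.log_prod (fun k hk => ne_of_gt (hfacpos k hk))]
    have hterm : ∀ k ∈ Finset.Ico 1 m,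
        Real.log ((k:ℝ) ^ (-(if Even (Nat.log 2 k) then α else β)))
          = -((if Even (Nat.log 2 k) then α else β) * Real.log k) := by
      intro k hk
      obtain ⟨hk1, _⟩ := Finset.mem_Ico.mp hk
      rw [Real.log_rpow (by exact_mod_cast hk1 : (0:ℝ) < k)]
      ring
    rw [Finset.sum_congr rfl hterm, Finset.sum_neg_distrib, S15.sum_c]
    rw [Real.log_rpow hlmpos, hlm, Real.log_rpow hmpos]
    ring
  constructor
  · apply S15.liminf_coe_eq
    · -- eventual lower bound
      intro ε hε
      have hC : (0:ℝ) < 3*β + 11*(α-β)/9 := by linarith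
      set K : ℕ := max 3 ⌈(3*β + 11*(α-β)/9)/ε⌉₊ with hK
      filter_upwards [eventually_ge_atTop (2^K)] with m hm
      have hK3 : 3 ≤ K := le_max_left _ _
      have h8m : 8 ≤ m := le_trans (by calc (8:ℕ) = 2^3 := by norm_num
        _ ≤ 2^K := Nat.pow_le_pow_right (by norm_num) hK3) hm
      have hm2 : 2 ≤ m := by omega
      have hm1 : (1:ℕ) ≤ m := by omega
      have hMK : K ≤ Nat.log 2 m :=
        (Nat.le_log_iff_pow_le (by norm_num) (by omega)).mpr hm
      have hM3 : 3 ≤ Nat.log 2 m := le_trans hK3 hMK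
      have hmR : (1:ℝ) < m := by exact_mod_cast (by omega : 1 < m)
      have hXpos : 0 < (m:ℝ) * Real.log m :=
        mul_pos (by positivity) (Real.log_pos hmR)
      rw [hu1 m hm2, le_div_iff₀ hXpos]
      have hE := S15.E_lb hm1
      have hF := S15.F_lb hm1
      have hEO := S15.EO m
      have hXub : (m:ℝ) * Real.log m ≤ (m:ℝ) * (((Nat.log 2 m : ℝ) + 1) * S15.D) :=
        mul_le_mul_of_nonneg_left (S15.log_m_ub hm1) (by positivity)
      have hcnn : 0 ≤ (if Even (Nat.log 2 m) then α else β)/2 * Real.log m := by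
        apply mul_nonneg _ (Real.log_natCast_nonneg m)
        split <;> linarith
      have hKC : (3*β + 11*(α-β)/9) ≤ ε * K := by
        have h1 : ((3*β + 11*(α-β)/9)/ε) ≤ (⌈(3*β + 11*(α-β)/9)/ε⌉₊ : ℝ) := Nat.le_ceil _
        have h2 : ((⌈(3*β + 11*(α-β)/9)/ε⌉₊ : ℕ) : ℝ) ≤ (K:ℝ) := by
          exact_mod_cast le_max_right 3 _
        rw [div_le_iff₀ hε] at h1
        calc (3*β + 11*(α-β)/9) ≤ (⌈(3*β + 11*(α-β)/9)/ε⌉₊ : ℝ) * ε := h1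
        _ ≤ K * ε := by nlinarith
        _ = ε * K := by ring
      have hMKR : (K:ℝ) ≤ (Nat.log 2 m : ℝ) := by exact_mod_cast hMK
      have hMR3 : (3:ℝ) ≤ (Nat.log 2 m : ℝ) := by exact_mod_cast hM3
      set MR : ℝ := (Nat.log 2 m : ℝ)
      -- N ≥ β * F + (α-β) * E
      have h1 : β * S15.F m ≥ β * (S15.D * ((m:ℝ) * (MR - 2))) :=
        mul_le_mul_of_nonneg_left hF hβ0.le
      have h2 : (α - β) * S15.E m ≥ (α - β) * (S15.D * ((m:ℝ) * (3*MR - 8) / 9)) :=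
        mul_le_mul_of_nonneg_left hE hab.le
      have hEOβ : β * S15.O m = β * S15.F m - β * S15.E m := by
        rw [← hEO]; ring
      rcases le_or_gt 0 ((2*β+α)/3 - ε) with hsgn | hsgn
      · have hXX : ((2*β+α)/3 - ε) * ((m:ℝ) * Real.log m)
            ≤ ((2*β+α)/3 - ε) * ((m:ℝ) * ((MR + 1) * S15.D)) :=
          mul_le_mul_of_nonneg_left hXub hsgn
        have hεM : (3*β + 11*(α-β)/9) ≤ ε * (MR + 1) := by
          have := mul_le_mul_of_nonneg_left hMKR hε.le
          nlinarith [hKC]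
        have hint : 0 ≤ S15.D * (m:ℝ) * (ε * (MR + 1) - (3*β + 11*(α-β)/9)) :=
          mul_nonneg (mul_nonneg S15.D_pos.le (by positivity)) (by linarith)
        linarith [h1, h2, hXX, hint, hcnn, hEOβ]
      · have hneg : ((2*β+α)/3 - ε) * ((m:ℝ) * Real.log m) ≤ 0 :=
          mul_nonpos_of_nonpos_of_nonneg hsgn.le hXpos.le
        have hE1 : 0 ≤ α * S15.E m := mul_nonneg hα0.le (S15.E_nonneg m)
        have hO1 : 0 ≤ β * S15.O m := mul_nonneg hβ0.le (S15.O_nonneg m)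
        linarith [hcnn, hE1, hO1]
    · -- frequently upper bound
      intro ε hε
      rw [frequently_atTop]
      intro N₀
      set Jm : ℕ := max (max 1 N₀) ⌈α/(2*ε)⌉₊ with hJm
      refine ⟨2^(2*Jm), ?_, ?_⟩
      · calc N₀ ≤ Jm := le_trans (le_max_right 1 N₀) (le_max_left _ _)
        _ ≤ 2^Jm := Nat.le_of_lt (Nat.lt_two_pow_self (n := Jm))
        _ ≤ 2^(2*Jm) := Nat.pow_le_pow_right (by norm_num) (by omega)
      · have hJ1 : 1 ≤ Jm := le_trans (le_max_left 1 N₀) (le_max_left _ _)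
        have hm2 : 2 ≤ 2^(2*Jm) := by
          calc 2 = 2^1 := by norm_num
          _ ≤ 2^(2*Jm) := Nat.pow_le_pow_right (by norm_num) (by omega)
        rw [hu1 _ hm2]
        have hMeq : Nat.log 2 (2^(2*Jm)) = 2*Jm := Nat.log_pow (by norm_num) _
        have hmR : (1:ℝ) < ((2^(2*Jm):ℕ):ℝ) := by exact_mod_cast (by omega : 1 < 2^(2*Jm))
        have hXpos : 0 < ((2^(2*Jm):ℕ):ℝ) * Real.log ((2^(2*Jm):ℕ):ℝ) :=
          mul_pos (by positivity) (Real.log_pos hmR)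
        rw [div_le_iff₀ hXpos]
        have hcm : (if Even (Nat.log 2 (2^(2*Jm))) then α else β) = α := by
          rw [hMeq, if_pos (even_two_mul Jm)]
        rw [hcm]
        have hEub := S15.E_ub_subseq Jm
        have hFub := S15.F_ub (le_of_lt (by omega : 1 < 2^(2*Jm)))
        have hEO := S15.EO (2^(2*Jm))
        have hlognn : 0 ≤ Real.log ((2^(2*Jm):ℕ):ℝ) := le_of_lt (Real.log_pos hmR)
        have hmge : α/(2*ε) ≤ ((2^(2*Jm):ℕ):ℝ) := by
          calc α/(2*ε) ≤ (⌈α/(2*ε)⌉₊ : ℝ) := Nat.le_ceil _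
          _ ≤ (Jm : ℝ) := by exact_mod_cast le_max_right _ _
          _ ≤ ((2^(2*Jm):ℕ):ℝ) := by
              exact_mod_cast Nat.le_of_lt (lt_of_lt_of_le (Nat.lt_two_pow_self (n := Jm))
                (Nat.pow_le_pow_right (by norm_num) (by omega)))
        have hα2 : α/2 ≤ ε * ((2^(2*Jm):ℕ):ℝ) := by
          have h2e : (0:ℝ) < 2*ε := by linarith
          rw [div_le_iff₀ h2e] at hmge
          linarith
        have h1 : β * S15.F (2^(2*Jm)) ≤ β * (((2^(2*Jm):ℕ):ℝ) * Real.log ((2^(2*Jm):ℕ):ℝ)) :=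
          mul_le_mul_of_nonneg_left hFub hβ0.le
        have h2 : (α-β) * S15.E (2^(2*Jm)) ≤ (α-β) *
            ((1/3) * ((2^(2*Jm):ℕ):ℝ) * Real.log ((2^(2*Jm):ℕ):ℝ)) :=
          mul_le_mul_of_nonneg_left hEub hab.le
        have hint : 0 ≤ (ε * ((2^(2*Jm):ℕ):ℝ) - α/2) * Real.log ((2^(2*Jm):ℕ):ℝ) :=
          mul_nonneg (by linarith) hlognn
        have hEOβ : β * S15.O (2^(2*Jm)) = β * S15.F (2^(2*Jm)) - β * S15.E (2^(2*Jm)) := by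
          rw [← hEO]; ring
        linarith [h1, h2, hint, hEOβ]
  · have hterm := fun (k:ℕ) (hk : 1 ≤ k) => S15.theta_term_bounds γ hγ θ hθ k hk
    have hu2 : ∀ m : ℕ, 2 ≤ m →
        (-(1 / ((m : ℝ) * Real.log m)) *
          Real.log (∏ k ∈ Finset.Ico 1 m, |Real.sin (θ k)|))
        = (∑ k ∈ Finset.Ico 1 m, -Real.log |Real.sin (θ k)|) / ((m:ℝ) * Real.log m) := by
      intro m _
      rw [Real.log_prod (fun k hk => (hterm k (Finset.mem_Ico.mp hk).1).1)]
      rw [Finset.sum_neg_distrib]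
      ring
    have hsum_ite : ∀ m : ℕ,
        ∑ k ∈ Finset.Ico 1 m, (if Even (Nat.log 2 k) then 0 else γ * Real.log k)
          = γ * S15.O m := by
      intro m
      rw [S15.O, Finset.mul_sum]
      apply Finset.sum_congr rfl
      intro k _
      by_cases hp : Even (Nat.log 2 k) <;> simp [hp]
    have hTlb : ∀ m : ℕ, γ * S15.O m ≤ ∑ k ∈ Finset.Ico 1 m, -Real.log |Real.sin (θ k)| := by
      intro m
      rw [← hsum_ite m]
      exact Finset.sum_le_sum (fun k hk => (hterm k (Finset.mem_Ico.mp hk).1).2.1)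
    have hTub : ∀ m : ℕ,
        (∑ k ∈ Finset.Ico 1 m, -Real.log |Real.sin (θ k)|) ≤ γ * S15.O m + m := by
      intro m
      calc ∑ k ∈ Finset.Ico 1 m, -Real.log |Real.sin (θ k)|
          ≤ ∑ k ∈ Finset.Ico 1 m, ((if Even (Nat.log 2 k) then 0 else γ * Real.log k) + 1) :=
            Finset.sum_le_sum (fun k hk => (hterm k (Finset.mem_Ico.mp hk).1).2.2)
        _ = γ * S15.O m + ((m - 1 : ℕ):ℝ) := by
            rw [Finset.sum_add_distrib, hsum_ite m, Finset.sum_const, Nat.card_Ico,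
              nsmul_eq_mul, mul_one]
        _ ≤ γ * S15.O m + m := by
            have : ((m - 1 : ℕ):ℝ) ≤ (m:ℝ) := by exact_mod_cast Nat.sub_le m 1
            linarith
    apply S15.liminf_coe_eq
    · intro ε hε
      set K : ℕ := max 3 ⌈(11*γ/9)/ε⌉₊ with hK
      filter_upwards [eventually_ge_atTop (2^K)] with m hm
      have hK3 : 3 ≤ K := le_max_left _ _
      have h8m : 8 ≤ m := le_trans (by calc (8:ℕ) = 2^3 := by norm_num
        _ ≤ 2^K := Nat.pow_le_pow_right (by norm_num) hK3) hm
      have hm2 : 2 ≤ m := by omega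
      have hm1 : (1:ℕ) ≤ m := by omega
      have hMK : K ≤ Nat.log 2 m :=
        (Nat.le_log_iff_pow_le (by norm_num) (by omega)).mpr hm
      have hM3 : 3 ≤ Nat.log 2 m := le_trans hK3 hMK
      have hmR : (1:ℝ) < m := by exact_mod_cast (by omega : 1 < m)
      have hXpos : 0 < (m:ℝ) * Real.log m :=
        mul_pos (by positivity) (Real.log_pos hmR)
      rw [hu2 m hm2, le_div_iff₀ hXpos]
      have hO := S15.O_lb hm1
      have hT := hTlb m
      have hγO : γ * (S15.D * ((m:ℝ) * (3*(Nat.log 2 m:ℝ) - 8) / 9)) ≤ γ * S15.O m :=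
        mul_le_mul_of_nonneg_left hO hγ.le
      have hXub : (m:ℝ) * Real.log m ≤ (m:ℝ) * (((Nat.log 2 m : ℝ) + 1) * S15.D) :=
        mul_le_mul_of_nonneg_left (S15.log_m_ub hm1) (by positivity)
      have hKC : (11*γ/9) ≤ ε * K := by
        have h1 : ((11*γ/9)/ε) ≤ (⌈(11*γ/9)/ε⌉₊ : ℝ) := Nat.le_ceil _
        have h2 : ((⌈(11*γ/9)/ε⌉₊ : ℕ) : ℝ) ≤ (K:ℝ) := by
          exact_mod_cast le_max_right 3 _
        rw [div_le_iff₀ hε] at h1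
        nlinarith
      have hMKR : (K:ℝ) ≤ (Nat.log 2 m : ℝ) := by exact_mod_cast hMK
      set MR : ℝ := (Nat.log 2 m : ℝ)
      rcases le_or_gt 0 (γ/3 - ε) with hsgn | hsgn
      · have hXX : (γ/3 - ε) * ((m:ℝ) * Real.log m)
            ≤ (γ/3 - ε) * ((m:ℝ) * ((MR + 1) * S15.D)) :=
          mul_le_mul_of_nonneg_left hXub hsgn
        have hεM : (11*γ/9) ≤ ε * (MR + 1) := by
          have := mul_le_mul_of_nonneg_left hMKR hε.le
          nlinarith [hKC]
        have hint : 0 ≤ S15.D * (m:ℝ) * (ε * (MR + 1) - 11*γ/9) :=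
          mul_nonneg (mul_nonneg S15.D_pos.le (by positivity)) (by linarith)
        linarith [hγO, hT, hXX, hint]
      · have hneg : (γ/3 - ε) * ((m:ℝ) * Real.log m) ≤ 0 :=
          mul_nonpos_of_nonpos_of_nonneg hsgn.le hXpos.le
        have hO1 : 0 ≤ γ * S15.O m := mul_nonneg hγ.le (S15.O_nonneg m)
        linarith [hT, hO1]
    · intro ε hε
      rw [frequently_atTop]
      intro N₀
      set Jm : ℕ := max N₀ ⌈1/ε⌉₊ with hJm
      refine ⟨2^(2*Jm+1), ?_, ?_⟩
      · calc N₀ ≤ Jm := le_max_left _ _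
        _ ≤ 2^Jm := Nat.le_of_lt (Nat.lt_two_pow_self (n := Jm))
        _ ≤ 2^(2*Jm+1) := Nat.pow_le_pow_right (by norm_num) (by omega)
      · have hm2 : 2 ≤ 2^(2*Jm+1) := by
          calc 2 = 2^1 := by norm_num
          _ ≤ 2^(2*Jm+1) := Nat.pow_le_pow_right (by norm_num) (by omega)
        have hm1 : (1:ℕ) ≤ 2^(2*Jm+1) := by omega
        rw [hu2 _ hm2]
        have hmR : (1:ℝ) < ((2^(2*Jm+1):ℕ):ℝ) := by
          exact_mod_cast (by omega : 1 < 2^(2*Jm+1))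
        have hXpos : 0 < ((2^(2*Jm+1):ℕ):ℝ) * Real.log ((2^(2*Jm+1):ℕ):ℝ) :=
          mul_pos (by positivity) (Real.log_pos hmR)
        rw [div_le_iff₀ hXpos]
        have hOub := S15.O_ub_subseq Jm
        have hT := hTub (2^(2*Jm+1))
        have hγO : γ * S15.O (2^(2*Jm+1)) ≤ γ *
            ((1/3) * ((2^(2*Jm+1):ℕ):ℝ) * Real.log ((2^(2*Jm+1):ℕ):ℝ)) :=
          mul_le_mul_of_nonneg_left hOub hγ.le
        have hD2 : (1/2:ℝ) ≤ S15.D := by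
          rw [S15.D]; linarith [Real.log_two_gt_d9]
        have hJε : (1:ℝ)/ε ≤ (Jm:ℝ) := by
          calc (1:ℝ)/ε ≤ (⌈1/ε⌉₊ : ℝ) := Nat.le_ceil _
          _ ≤ (Jm : ℝ) := by exact_mod_cast le_max_right _ _
        have hlog : (1:ℝ)/ε ≤ Real.log ((2^(2*Jm+1):ℕ):ℝ) := by
          rw [S15.log_pow2]
          have hJnn : (0:ℝ) ≤ (2*Jm+1:ℕ) := by positivity
          calc (1:ℝ)/ε ≤ (Jm:ℝ) := hJε
          _ ≤ ((2*Jm+1:ℕ):ℝ) * (1/2) := by push_cast; linarith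
          _ ≤ ((2*Jm+1:ℕ):ℝ) * S15.D := by
              apply mul_le_mul_of_nonneg_left hD2 hJnn
        have hεlog : 1 ≤ ε * Real.log ((2^(2*Jm+1):ℕ):ℝ) := by
          rw [div_le_iff₀ hε] at hlog
          linarith
        have hint : 0 ≤ (ε * Real.log ((2^(2*Jm+1):ℕ):ℝ) - 1) * ((2^(2*Jm+1):ℕ):ℝ) :=
          mul_nonneg (by linarith) (by positivity)
        linarith [hT, hγO, hint]
end

section
/- Let L > 0, let (x_n)_{n≥0} be a strictly increasing sequence with x_0 = 0 and sup_n x_n = L, and let M₁, M₂ be disjoint measurable subsets of [0,L) such that for every n ≥ 1 the interval [x_{n−1}, x_n) is contained in M₁ or contained in M₂. Let Ω be a finite collection of pairwise disjoint intervals of the form [a,b) whose union is [0,L). Then there exists a finite collection Ω̃ of pairwise disjoint intervals whose union is [0,L), each member of Ω̃ being of the form [x_m, x_n) with m < n or of the form [x_m, L), such that #Ω̃ ≤ 4·#Ω and ∑_{ω∈Ω̃} √(λ(ω∩M₁)·λ(ω∩M₂)) ≤ ∑_{ω∈Ω} √(λ(ω∩M₁)·λ(ω∩M₂)), where λ denotes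 Lebesgue measure. -/
open MeasureTheory Set

/-- Index of the cell `[x n, x (n+1))` containing `t`. -/
noncomputable def sIdx (x : ℕ → ℝ) (t : ℝ) : ℕ := sInf {n : ℕ | t < x (n + 1)}

/-- The quantity associated to an interval. -/
noncomputable def valFn (M₁ M₂ : Set ℝ) (p : ℝ × ℝ) : ℝ :=
  Real.sqrt ((volume (Ico p.1 p.2 ∩ M₁)).toReal * (volume (Ico p.1 p.2 ∩ M₂)).toReal)

lemma valFn_nonneg (M₁ M₂ : Set ℝ) (p : ℝ × ℝ) : 0 ≤ valFn M₁ M₂ p :=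
  Real.sqrt_nonneg _

lemma valFn_mono (M₁ M₂ : Set ℝ) (p q : ℝ × ℝ) (h1 : q.1 ≤ p.1) (h2 : p.2 ≤ q.2) :
    valFn M₁ M₂ p ≤ valFn M₁ M₂ q := by
  apply Real.sqrt_le_sqrt
  have key : ∀ M : Set ℝ,
      (volume (Ico p.1 p.2 ∩ M)).toReal ≤ (volume (Ico q.1 q.2 ∩ M)).toReal := by
    intro M
    apply ENNReal.toReal_mono
    · exact ne_of_lt (lt_of_le_of_lt (measure_mono inter_subset_left)
        (by rw [Real.volume_Ico]; exact ENNReal.ofReal_lt_top))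
    · exact measure_mono (inter_subset_inter_left M (Ico_subset_Ico h1 h2))
  exact mul_le_mul (key M₁) (key M₂) ENNReal.toReal_nonneg ENNReal.toReal_nonneg

lemma valFn_zero (M₁ M₂ : Set ℝ) (hdisj : Disjoint M₁ M₂) (p : ℝ × ℝ)
    (h : Ico p.1 p.2 ⊆ M₁ ∨ Ico p.1 p.2 ⊆ M₂) : valFn M₁ M₂ p = 0 := by
  have hie : M₁ ∩ M₂ = ∅ := Set.disjoint_iff_inter_eq_empty.mp hdisj
  rcases h with h | h
  · have h2 : Ico p.1 p.2 ∩ M₂ = ∅ := by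
      apply Set.subset_empty_iff.mp
      rw [← hie]
      exact fun t ht => ⟨h ht.1, ht.2⟩
    simp [valFn, h2]
  · have h2 : Ico p.1 p.2 ∩ M₁ = ∅ := by
      apply Set.subset_empty_iff.mp
      rw [← hie]
      exact fun t ht => ⟨ht.2, h ht.1⟩
    simp [valFn, h2]

theorem stmt17 (L : ℝ) (hL : 0 < L) (x : ℕ → ℝ) (hmono : StrictMono x)
    (hx0 : x 0 = 0) (hsup : (⨆ n, x n) = L)
    (M₁ M₂ : Set ℝ) (hM₁ : MeasurableSet M₁) (hM₂ : MeasurableSet M₂)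
    (hdisj : Disjoint M₁ M₂) (hM₁sub : M₁ ⊆ Ico 0 L) (hM₂sub : M₂ ⊆ Ico 0 L)
    (hcell : ∀ n : ℕ, Ico (x n) (x (n + 1)) ⊆ M₁ ∨ Ico (x n) (x (n + 1)) ⊆ M₂)
    (Ω : Finset (ℝ × ℝ))
    (hΩdisj : ∀ p ∈ Ω, ∀ q ∈ Ω, p ≠ q → Disjoint (Ico p.1 p.2) (Ico q.1 q.2))
    (hΩcov : (⋃ p ∈ Ω, Ico p.1 p.2) = Ico 0 L) :
    ∃ Ω' : Finset (ℝ × ℝ),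
      (∀ p ∈ Ω', ∀ q ∈ Ω', p ≠ q → Disjoint (Ico p.1 p.2) (Ico q.1 q.2)) ∧
      (⋃ p ∈ Ω', Ico p.1 p.2) = Ico 0 L ∧
      (∀ p ∈ Ω',
        (∃ m n : ℕ, m < n ∧ p.1 = x m ∧ p.2 = x n) ∨ (∃ m : ℕ, p.1 = x m ∧ p.2 = L)) ∧
      Ω'.card ≤ 4 * Ω.card ∧
      (∑ p ∈ Ω', Real.sqrt
          ((volume (Ico p.1 p.2 ∩ M₁)).toReal * (volume (Ico p.1 p.2 ∩ M₂)).toReal)) ≤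
        ∑ p ∈ Ω, Real.sqrt
          ((volume (Ico p.1 p.2 ∩ M₁)).toReal * (volume (Ico p.1 p.2 ∩ M₂)).toReal) := by
  classical
  -- ## Basic node facts
  have hbdd : BddAbove (Set.range x) := by
    by_contra h
    rw [Real.iSup_of_not_bddAbove h] at hsup
    linarith
  have hxle : ∀ n, x n ≤ L := by
    intro n; rw [← hsup]; exact le_ciSup hbdd n
  have hxlt : ∀ n, x n < L := fun n =>
    lt_of_lt_of_le (hmono (Nat.lt_succ_self n)) (hxle (n + 1))
  have hxnn : ∀ n, 0 ≤ x n := fun n => hx0 ▸ hmono.monotone (Nat.zero_le n)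
  -- ## Index function facts
  have hne : ∀ t : ℝ, t < L → {n : ℕ | t < x (n + 1)}.Nonempty := by
    intro t ht
    obtain ⟨n, hn⟩ := exists_lt_of_lt_ciSup (hsup.symm ▸ ht)
    exact ⟨n, hn.trans_le (hmono (Nat.lt_succ_self n)).le⟩
  have hidx2 : ∀ t : ℝ, t < L → t < x (sIdx x t + 1) := fun t ht => Nat.sInf_mem (hne t ht)
  have hidx1 : ∀ t : ℝ, 0 ≤ t → x (sIdx x t) ≤ t := by
    intro t ht0
    rcases Nat.eq_zero_or_pos (sIdx x t) with h | h
    · rw [h, hx0]; exact ht0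
    · by_contra hc
      push_neg at hc
      have hm : sIdx x t - 1 ∈ {n : ℕ | t < x (n + 1)} := by
        simp only [Set.mem_setOf_eq, Nat.sub_add_cancel h]
        exact hc
      have := Nat.sInf_le hm
      have : sIdx x t ≤ sIdx x t - 1 := this
      omega
  have hidx_u : ∀ (t : ℝ) (m : ℕ), x m ≤ t → t < x (m + 1) → sIdx x t = m := by
    intro t m h1 h2
    refine le_antisymm (Nat.sInf_le h2) (le_csInf ⟨m, h2⟩ ?_)
    intro b hb
    have hb' : t < x (b + 1) := hb
    have : x m < x (b + 1) := lt_of_le_of_lt h1 hb'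
    exact Nat.lt_succ_iff.mp (hmono.lt_iff_lt.mp this)
  -- ## The nonempty members of Ω
  set Ω₀ : Finset (ℝ × ℝ) := Ω.filter (fun p => p.1 < p.2) with hΩ₀def
  have hΩ₀Ω : ∀ q ∈ Ω₀, q ∈ Ω := fun q hq => (Finset.mem_filter.mp hq).1
  have hΩ₀lt : ∀ q ∈ Ω₀, q.1 < q.2 := fun q hq => (Finset.mem_filter.mp hq).2
  have hpt : ∀ q ∈ Ω₀, ∀ t, q.1 ≤ t → t < q.2 → 0 ≤ t ∧ t < L := by
    intro q hq t h1 h2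
    have : t ∈ ⋃ p ∈ Ω, Ico p.1 p.2 := Set.mem_iUnion₂.mpr ⟨q, hΩ₀Ω q hq, ⟨h1, h2⟩⟩
    rw [hΩcov] at this
    exact ⟨this.1, this.2⟩
  have hcov₀ : ∀ t : ℝ, 0 ≤ t → t < L → ∃ q ∈ Ω₀, q.1 ≤ t ∧ t < q.2 := by
    intro t h0 hl
    have ht : t ∈ ⋃ p ∈ Ω, Ico p.1 p.2 := by rw [hΩcov]; exact ⟨h0, hl⟩
    obtain ⟨q, hq, htq⟩ := Set.mem_iUnion₂.mp ht
    exact ⟨q, Finset.mem_filter.mpr ⟨hq, lt_of_le_of_lt htq.1 htq.2⟩, htq.1, htq.2⟩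
  -- no left endpoint is strictly inside another member
  have hKL : ∀ q ∈ Ω₀, ∀ r ∈ Ω₀, q.1 < r.1 → r.1 < q.2 → False := by
    intro q hq r hr h1 h2
    have hne' : q ≠ r := fun h => by rw [h] at h1; exact lt_irrefl _ h1
    have hd := hΩdisj q (hΩ₀Ω q hq) r (hΩ₀Ω r hr) hne'
    exact Set.disjoint_left.mp hd ⟨h1.le, h2⟩ ⟨le_refl _, hΩ₀lt r hr⟩
  -- right endpoints below L are left endpoints
  have hE2 : ∀ q ∈ Ω₀, q.2 < L → ∃ r ∈ Ω₀, r.1 = q.2 := by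
    intro q hq hq2
    have hq12 : q.1 < q.2 := hΩ₀lt q hq
    have h0 : 0 ≤ q.2 := le_of_lt (lt_of_le_of_lt (hpt q hq q.1 le_rfl hq12).1 hq12)
    obtain ⟨r, hr, hr1, hr2⟩ := hcov₀ q.2 h0 hq2
    rcases lt_or_eq_of_le hr1 with h | h
    · exfalso
      rcases lt_or_ge q.1 r.1 with h' | h'
      · exact hKL q hq r hr h' h
      · have hne' : q ≠ r := by
          intro he
          rw [← he] at hr2
          exact lt_irrefl _ hr2
        have hd := hΩdisj q (hΩ₀Ω q hq) r (hΩ₀Ω r hr) hne'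
        exact Set.disjoint_left.mp hd ⟨le_refl _, hq12⟩ ⟨h', lt_trans hq12 hr2⟩
    · exact ⟨r, hr, h⟩
  -- ## The marked node indices
  set N : Finset ℕ :=
    Ω₀.image (fun p => sIdx x p.1) ∪ Ω₀.image (fun p => sIdx x p.1 + 1) with hNdef
  have hN_in1 : ∀ p ∈ Ω₀, sIdx x p.1 ∈ N := fun p hp =>
    Finset.mem_union_left _ (Finset.mem_image.mpr ⟨p, hp, rfl⟩)
  have hN_in2 : ∀ p ∈ Ω₀, sIdx x p.1 + 1 ∈ N := fun p hp =>
    Finset.mem_union_right _ (Finset.mem_image.mpr ⟨p, hp, rfl⟩)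
  have hN_mem : ∀ j, j ∈ N →
      (∃ p ∈ Ω₀, sIdx x p.1 = j) ∨ (∃ p ∈ Ω₀, sIdx x p.1 + 1 = j) := by
    intro j hj
    rcases Finset.mem_union.mp hj with h | h
    · obtain ⟨p, hp, hpe⟩ := Finset.mem_image.mp h
      exact Or.inl ⟨p, hp, hpe⟩
    · obtain ⟨p, hp, hpe⟩ := Finset.mem_image.mp h
      exact Or.inr ⟨p, hp, hpe⟩
  have h0N : (0 : ℕ) ∈ N := by
    obtain ⟨q, hq, hq1, hq2⟩ := hcov₀ 0 le_rfl hL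
    have hq10 : q.1 = 0 := le_antisymm hq1 (hpt q hq q.1 le_rfl (hΩ₀lt q hq)).1
    have hidx0 : sIdx x q.1 = 0 := by
      rw [hq10]
      exact hidx_u 0 0 (le_of_eq hx0) (by rw [← hx0]; exact hmono Nat.zero_lt_one)
    have := hN_in1 q hq
    rwa [hidx0] at this
  -- ## The successor function
  set nxt : ℕ → ℝ := fun j =>
    if h : (N.filter fun k => j < k).Nonempty then x ((N.filter fun k => j < k).min' h)
    else L with hnxtdef
  have hnxt_pos : ∀ j, (N.filter fun k => j < k).Nonempty →
      ∃ m, m ∈ N ∧ j < m ∧ nxt j = x m ∧ ∀ k ∈ N, j < k → m ≤ k := by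
    intro j h
    have hmem := Finset.min'_mem (N.filter fun k => j < k) h
    refine ⟨(N.filter fun k => j < k).min' h, (Finset.mem_filter.mp hmem).1,
      (Finset.mem_filter.mp hmem).2, ?_, ?_⟩
    · simp only [hnxtdef]
      rw [dif_pos h]
    · intro k hk hjk
      exact Finset.min'_le _ _ (Finset.mem_filter.mpr ⟨hk, hjk⟩)
  have hnxt_neg : ∀ j, ¬(N.filter fun k => j < k).Nonempty → nxt j = L := by
    intro j h
    simp only [hnxtdef]
    rw [dif_neg h]
  have hnxt_gt : ∀ j, x j < nxt j := by
    intro j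
    by_cases h : (N.filter fun k => j < k).Nonempty
    · obtain ⟨m, _, hjm, heq, _⟩ := hnxt_pos j h
      rw [heq]; exact hmono hjm
    · rw [hnxt_neg j h]; exact hxlt j
  have hnxt_leL : ∀ j, nxt j ≤ L := by
    intro j
    by_cases h : (N.filter fun k => j < k).Nonempty
    · obtain ⟨m, _, _, heq, _⟩ := hnxt_pos j h
      rw [heq]; exact hxle m
    · rw [hnxt_neg j h]
  have hnxt_le : ∀ j k, k ∈ N → j < k → nxt j ≤ x k := by
    intro j k hk hjk
    have h : (N.filter fun l => j < l).Nonempty := ⟨k, Finset.mem_filter.mpr ⟨hk, hjk⟩⟩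
    obtain ⟨m, _, _, heq, hmin⟩ := hnxt_pos j h
    rw [heq]
    exact hmono.monotone (hmin k hk hjk)
  -- ## The new covering
  refine ⟨N.image (fun j => (x j, nxt j)), ?_, ?_, ?_, ?_, ?_⟩
  -- disjointness
  · intro p hp q hq hpq
    obtain ⟨j, hj, rfl⟩ := Finset.mem_image.mp hp
    obtain ⟨k, hk, rfl⟩ := Finset.mem_image.mp hq
    have hjk : j ≠ k := fun h => hpq (by rw [h])
    have key : ∀ a b, b ∈ N → a < b →
        Disjoint (Ico (x a) (nxt a)) (Ico (x b) (nxt b)) := by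
      intro a b hb hab
      rw [Set.disjoint_left]
      rintro t ⟨_, ht2⟩ ⟨ht3, _⟩
      exact absurd (lt_of_lt_of_le ht2 (hnxt_le a b hb hab)) (not_lt.mpr ht3)
    rcases lt_or_gt_of_ne hjk with h | h
    · exact key j k hk h
    · exact (key k j hj h).symm
  -- covering
  · apply Set.Subset.antisymm
    · intro t ht
      obtain ⟨p, hp, htp⟩ := Set.mem_iUnion₂.mp ht
      obtain ⟨j, hj, rfl⟩ := Finset.mem_image.mp hp
      exact ⟨le_trans (hxnn j) htp.1, lt_of_lt_of_le htp.2 (hnxt_leL j)⟩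
    · intro t ht
      have hS : (N.filter fun j => x j ≤ t).Nonempty :=
        ⟨0, Finset.mem_filter.mpr ⟨h0N, by rw [hx0]; exact ht.1⟩⟩
      set jj := (N.filter fun j => x j ≤ t).max' hS with hjjdef
      have hj1 := Finset.mem_filter.mp (Finset.max'_mem _ hS)
      have hlt : t < nxt jj := by
        by_contra hc
        push_neg at hc
        by_cases hf : (N.filter fun k => jj < k).Nonempty
        · obtain ⟨m, hmN, hjm, heq, _⟩ := hnxt_pos jj hf
          have hmf : m ∈ N.filter fun j => x j ≤ t :=
            Finset.mem_filter.mpr ⟨hmN, by rw [← heq]; exact hc⟩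
          have := Finset.le_max' _ m hmf
          omega
        · rw [hnxt_neg jj hf] at hc
          exact absurd ht.2 (not_lt.mpr hc)
      exact Set.mem_iUnion₂.mpr
        ⟨(x jj, nxt jj), Finset.mem_image.mpr ⟨jj, hj1.1, rfl⟩, hj1.2, hlt⟩
  -- form
  · intro p hp
    obtain ⟨j, hj, rfl⟩ := Finset.mem_image.mp hp
    by_cases hf : (N.filter fun k => j < k).Nonempty
    · obtain ⟨m, _, hjm, heq, _⟩ := hnxt_pos j hf
      exact Or.inl ⟨j, m, hjm, rfl, heq⟩
    · exact Or.inr ⟨j, rfl, hnxt_neg j hf⟩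
  -- cardinality
  · calc (N.image (fun j => (x j, nxt j))).card ≤ N.card := Finset.card_image_le
      _ ≤ (Ω₀.image (fun p => sIdx x p.1)).card +
          (Ω₀.image (fun p => sIdx x p.1 + 1)).card := by
          rw [hNdef]; exact Finset.card_union_le _ _
      _ ≤ Ω₀.card + Ω₀.card := add_le_add Finset.card_image_le Finset.card_image_le
      _ ≤ Ω.card + Ω.card := add_le_add (Finset.card_filter_le _ _) (Finset.card_filter_le _ _)
      _ ≤ 4 * Ω.card := by omega
  -- the sum inequality
  · show ∑ p ∈ N.image (fun j => (x j, nxt j)), valFn M₁ M₂ p ≤ ∑ p ∈ Ω, valFn M₁ M₂ p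
    have hinj : ∀ a ∈ N, ∀ b ∈ N, (x a, nxt a) = (x b, nxt b) → a = b := by
      intro a _ b _ h
      exact hmono.injective (congrArg Prod.fst h)
    rw [Finset.sum_image hinj]
    have hsplit := Finset.sum_filter_add_sum_filter_not N
      (fun j => ∃ p ∈ Ω₀, sIdx x p.1 = j) (fun j => valFn M₁ M₂ (x j, nxt j))
    rw [← hsplit]
    -- the "cell" part vanishes
    have hA : ∑ j ∈ N.filter (fun j => ∃ p ∈ Ω₀, sIdx x p.1 = j),
        valFn M₁ M₂ (x j, nxt j) = 0 := by
      apply Finset.sum_eq_zero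
      intro j hj
      obtain ⟨hjN, p, hp, hpj⟩ := Finset.mem_filter.mp hj
      have hj1N : j + 1 ∈ N := by
        have := hN_in2 p hp
        rwa [hpj] at this
      have hnn : nxt j = x (j + 1) := by
        have hf : (N.filter fun k => j < k).Nonempty :=
          ⟨j + 1, Finset.mem_filter.mpr ⟨hj1N, Nat.lt_succ_self j⟩⟩
        obtain ⟨m, _, hjm, heq, hmin⟩ := hnxt_pos j hf
        have h1 : m ≤ j + 1 := hmin (j + 1) hj1N (Nat.lt_succ_self j)
        have h2 : m = j + 1 := by omega
        rw [heq, h2]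
      rw [hnn]
      exact valFn_zero M₁ M₂ hdisj (x j, x (j + 1)) (hcell j)
    rw [hA, zero_add]
    -- the rest
    set B := N.filter (fun j => ¬∃ p ∈ Ω₀, sIdx x p.1 = j) with hBdef
    have hBN : ∀ j ∈ B, j ∈ N := fun j hj => (Finset.mem_filter.mp hj).1
    have hBnP : ∀ j ∈ B, ¬∃ p ∈ Ω₀, sIdx x p.1 = j := fun j hj => (Finset.mem_filter.mp hj).2
    have hBspec : ∀ j : ℕ, ∃ q, j ∈ B → q ∈ Ω₀ ∧ q.1 ≤ x j ∧ x j < q.2 := by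
      intro j
      by_cases hj : j ∈ B
      · obtain ⟨q, hq, h⟩ := hcov₀ (x j) (hxnn j) (hxlt j)
        exact ⟨q, fun _ => ⟨hq, h⟩⟩
      · exact ⟨(0, 0), fun h => absurd h hj⟩
    choose g hg using hBspec
    have hg1 : ∀ j ∈ B, g j ∈ Ω₀ := fun j hj => (hg j hj).1
    have hg2 : ∀ j ∈ B, (g j).1 ≤ x j := fun j hj => (hg j hj).2.1
    have hg3 : ∀ j ∈ B, x j < (g j).2 := fun j hj => (hg j hj).2.2
    -- the next marked node is beyond the right endpoint of g j
    have claim1 : ∀ j ∈ B, nxt j ≤ (g j).2 := by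
      intro j hjB
      by_contra hc
      push_neg at hc
      have hg2L : (g j).2 < L := lt_of_lt_of_le hc (hnxt_leL j)
      obtain ⟨r, hr, hr1⟩ := hE2 (g j) (hg1 j hjB) hg2L
      have hkN : sIdx x r.1 ∈ N := hN_in1 r hr
      have h0r : 0 ≤ r.1 := by rw [hr1]; exact le_trans (hxnn j) (hg3 j hjB).le
      have hLr : r.1 < L := by rw [hr1]; exact hg2L
      have hkle : x (sIdx x r.1) ≤ (g j).2 := (hidx1 r.1 h0r).trans_eq hr1
      have hklt2 : (g j).2 < x (sIdx x r.1 + 1) := hr1.symm.trans_lt (hidx2 r.1 hLr)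
      have hxj : x j < x (sIdx x r.1 + 1) := lt_trans (hg3 j hjB) hklt2
      have hjk : j ≤ sIdx x r.1 := Nat.lt_succ_iff.mp (hmono.lt_iff_lt.mp hxj)
      have hjka : j ≠ sIdx x r.1 := fun h => hBnP j hjB ⟨r, hr, h.symm⟩
      have hjk' : j < sIdx x r.1 := lt_of_le_of_ne hjk hjka
      have := hnxt_le j (sIdx x r.1) hkN hjk'
      linarith
    -- g is injective on B
    have hgkey : ∀ a b, a ∈ B → b ∈ B → a < b → g a = g b → False := by
      intro a b ha hb hab heq
      have hq1a : (g a).1 ≤ x a := hg2 a ha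
      have hq2a : x a < (g a).2 := hg3 a ha
      have hq1b : (g a).1 ≤ x b := by rw [heq]; exact hg2 b hb
      have hq2b : x b < (g a).2 := by rw [heq]; exact hg3 b hb
      have hqΩ : g a ∈ Ω₀ := hg1 a ha
      have hf : (N.filter fun k => a < k).Nonempty :=
        ⟨b, Finset.mem_filter.mpr ⟨hBN b hb, hab⟩⟩
      obtain ⟨m, hmN, ham, _, hmmin⟩ := hnxt_pos a hf
      have hmb : m ≤ b := hmmin b (hBN b hb) hab
      rcases hN_mem m hmN with ⟨p, hp, hpm⟩ | ⟨p, hp, hpm⟩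
      · -- sIdx (p.1) = m : p.1 lies in [x m, x (m+1))
        have hmb' : m ≠ b := fun h => hBnP b hb ⟨p, hp, by rw [hpm, h]⟩
        have hmb2 : m + 1 ≤ b := by omega
        have hp1 := hpt p hp p.1 le_rfl (hΩ₀lt p hp)
        have h1 : x m ≤ p.1 := by rw [← hpm]; exact hidx1 p.1 hp1.1
        have h2 : p.1 < x (m + 1) := by rw [← hpm]; exact hidx2 p.1 hp1.2
        have hlow : (g a).1 < p.1 :=
          lt_of_le_of_lt hq1a (lt_of_lt_of_le (hmono ham) h1)
        have hhigh : p.1 < (g a).2 :=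
          lt_of_lt_of_le h2 (le_trans (hmono.monotone hmb2) hq2b.le)
        exact hKL (g a) hqΩ p hp hlow hhigh
      · -- sIdx (p.1) + 1 = m
        have hsa : a ≤ sIdx x p.1 := by omega
        have hp1 := hpt p hp p.1 le_rfl (hΩ₀lt p hp)
        have h1 : x (sIdx x p.1) ≤ p.1 := hidx1 p.1 hp1.1
        have h2 : p.1 < x (sIdx x p.1 + 1) := hidx2 p.1 hp1.2
        have hge : (g a).1 ≤ p.1 :=
          le_trans hq1a (le_trans (hmono.monotone hsa) h1)
        have hhigh : p.1 < (g a).2 := by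
          have hsb : sIdx x p.1 + 1 ≤ b := by omega
          exact lt_of_lt_of_le h2 (le_trans (hmono.monotone hsb) hq2b.le)
        rcases lt_or_eq_of_le hge with h | h
        · exact hKL (g a) hqΩ p hp h hhigh
        · -- (g a).1 = p.1, so p.1 = x a and sIdx p.1 = a, contradicting a ∈ B
          have hxa_le : x a ≤ p.1 := le_trans (hmono.monotone hsa) h1
          have hp1_le : p.1 ≤ x a := by rw [← h]; exact hq1a
          have hxs_le : x (sIdx x p.1) ≤ x a := le_trans h1 hp1_le
          have hsa' : sIdx x p.1 = a := le_antisymm (hmono.le_iff_le.mp hxs_le) hsa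
          have hxa : p.1 = x a := le_antisymm hp1_le hxa_le
          apply hBnP a ha
          exact ⟨p, hp, hsa'⟩
    have hginj : ∀ a ∈ B, ∀ b ∈ B, g a = g b → a = b := by
      intro a ha b hb hab
      by_contra hne'
      rcases lt_or_gt_of_ne hne' with h | h
      · exact hgkey a b ha hb h hab
      · exact hgkey b a hb ha h hab.symm
    have himg : B.image g ⊆ Ω := by
      intro q hq
      obtain ⟨j, hj, rfl⟩ := Finset.mem_image.mp hq
      exact hΩ₀Ω (g j) (hg1 j hj)
    calc ∑ j ∈ B, valFn M₁ M₂ (x j, nxt j)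
        ≤ ∑ j ∈ B, valFn M₁ M₂ (g j) :=
          Finset.sum_le_sum (fun j hj =>
            valFn_mono M₁ M₂ (x j, nxt j) (g j) (hg2 j hj) (claim1 j hj))
      _ = ∑ q ∈ B.image g, valFn M₁ M₂ q := (Finset.sum_image hginj).symm
      _ ≤ ∑ q ∈ Ω, valFn M₁ M₂ q :=
          Finset.sum_le_sum_of_subset_of_nonneg himg
            (fun q _ _ => valFn_nonneg M₁ M₂ q)
end
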